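/- With the graded branching system X of the exclusive cycle c based at v: for every edge e belonging to the cycle c, X_e = X_{s(e)}. -/
import Mathlib


/-- A directed graph with vertex set `V`, edge set `E`, source map `s` and range map `r`. -/
structure DiGraph where
  V : Type
  E : Type
  s : E → V
  r : E → V

namespace DiGraph

variable (G : DiGraph)

/-- There is an edge from `u` to `w`. -/
def Step (u w : G.V) : Prop := ∃ e : G.E, G.s e = u ∧ G.r e = w

/-- `G.Reach u w` means `u ≥ w`: there is a (possibly trivial) directed path from `u` to `w`. -/
def Reach (u w : G.V) : Prop := Relation.ReflTransGen G.Step u w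

/-- The root `R(W)` of a set of vertices `W`. -/
def root (W : Set G.V) : Set G.V := {u | ∃ w ∈ W, G.Reach u w}

/-- A set `H` of vertices is hereditary if `u ∈ H` and `u ≥ w` imply `w ∈ H`. -/
def Hereditary (H : Set G.V) : Prop := ∀ u ∈ H, ∀ w, G.Reach u w → w ∈ H

/-- A vertex is regular if it emits at least one and only finitely many edges. -/
def Regular (v : G.V) : Prop := (G.s ⁻¹' {v}).Nonempty ∧ (G.s ⁻¹' {v}).Finite

/-- A set `H` is saturated if every regular vertex all of whose out-edges
have ranges in `H` lies in `H`. -/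
def Saturated (H : Set G.V) : Prop :=
  ∀ v, G.Regular v → (∀ e, G.s e = v → G.r e ∈ H) → v ∈ H

/-- A set of vertices is downwards directed if every two of its elements have a
common lower bound in it. -/
def DownDirected (W : Set G.V) : Prop :=
  ∀ u ∈ W, ∀ v ∈ W, ∃ w ∈ W, G.Reach u w ∧ G.Reach v w

/-- The Countable Separation Property of a set of vertices. -/
def CSP (W : Set G.V) : Prop := ∃ C : Set G.V, C.Countable ∧ W ⊆ G.root C

/-- The Inner Countable Separation Property of a set of vertices. -/
def ICSP (W : Set G.V) : Prop := ∃ C : Set G.V, C.Countable ∧ C ⊆ W ∧ W ⊆ G.root C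

/-- `G.IsPathFrom v l` : the list of edges `l` forms a directed path starting at `v`. -/
def IsPathFrom : (G : DiGraph) → G.V → List G.E → Prop
  | _, _, [] => True
  | G, v, e :: es => G.s e = v ∧ G.IsPathFrom (G.r e) es

/-- The end (range) vertex of a path `l` starting at `v`. -/
def pathEnd : (G : DiGraph) → G.V → List G.E → G.V
  | _, v, [] => v
  | G, _, e :: es => G.pathEnd (G.r e) es

/-- The set of vertices on a path `l` starting at `v`. -/
def pathVerts (v : G.V) (l : List G.E) : Set G.V := insert v {w | ∃ e ∈ l, G.r e = w}

/-- A cycle based at `v` : a nonempty closed path in which distinct edges have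
distinct sources. -/
def IsCycle (v : G.V) (l : List G.E) : Prop :=
  l ≠ [] ∧ G.IsPathFrom v l ∧ G.pathEnd v l = v ∧ (l.map G.s).Nodup

/-- A cycle is exclusive if no vertex on it is the base of a cycle distinct from it
(cycles being identified with their sets of edges). -/
def ExclusiveCycle (v : G.V) (l : List G.E) : Prop :=
  G.IsCycle v l ∧ ∀ u ∈ G.pathVerts v l, ∀ m, G.IsCycle u m → (∀ e, e ∈ m ↔ e ∈ l)

open Classical in
/-- Auxiliary reduction on reversed edge lists: cancel common initial segments. -/
noncomputable def redAux (G : DiGraph) : List G.E → List G.E → List G.E × List G.E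
  | a :: as, b :: bs => if a = b then redAux G as bs else (a :: as, b :: bs)
  | as, bs => (as, bs)

/-- The reduction function: `red (p, q)` cancels the common final edges of the
paths `p` and `q`, implementing `red(ee*q*) = q*` and `red(pee*q*) = red(pq*)`. -/
noncomputable def red (p q : List G.E) : List G.E × List G.E :=
  ((G.redAux p.reverse q.reverse).1.reverse, (G.redAux p.reverse q.reverse).2.reverse)

/-- The source vertex of an element `pq*` (with `q` a path starting at the base
vertex `v`): the source of `p` if `p` is nonempty, and `r(q)` otherwise. -/
def startVtx (v : G.V) : List G.E × List G.E → G.V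
  | ([], q) => G.pathEnd v q
  | (e :: _, _) => G.s e

/-- Membership in the set `Y` associated to a cycle `c` (based at `cv`, with edges
`cl`) and a vertex `v ∈ c⁰`: pairs `(p, q)` of paths with `r(p) = r(q) ∈ c⁰` and
`s(q) = v`. -/
def MemY (cv : G.V) (cl : List G.E) (v : G.V) (x : List G.E × List G.E) : Prop :=
  G.IsPathFrom (G.startVtx v x) x.1 ∧ G.IsPathFrom v x.2 ∧
    G.pathEnd (G.startVtx v x) x.1 = G.pathEnd v x.2 ∧
    G.pathEnd v x.2 ∈ G.pathVerts cv cl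

/-- The degree `|p| − |q|` of an element `pq*`. -/
def degOf (G : DiGraph) (x : List G.E × List G.E) : ℤ :=
  (x.1.length : ℤ) - (x.2.length : ℤ)

/-- The branching system `X`: reduced elements of `Y`. -/
def Xset (cv : G.V) (cl : List G.E) (v : G.V) : Set (List G.E × List G.E) :=
  {x | G.MemY cv cl v x ∧ G.red x.1 x.2 = x}

/-- The subset `X_w` of `X` of elements with source vertex `w`. -/
def Xvtx (cv : G.V) (cl : List G.E) (v : G.V) (w : G.V) : Set (List G.E × List G.E) :=
  {x ∈ G.Xset cv cl v | G.startVtx v x = w}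

/-- The subset `X_e` of `X` of elements of the form `red(e r s*)` with `e r s* ∈ Y`. -/
def Xedge (cv : G.V) (cl : List G.E) (v : G.V) (e : G.E) : Set (List G.E × List G.E) :=
  {x | ∃ rs : List G.E × List G.E, G.MemY cv cl v (e :: rs.1, rs.2) ∧
    x = G.red (e :: rs.1) rs.2}

/-- The map `σ_e : X_{r(e)} → X_e`, `pq* ↦ red(e p q*)`. -/
noncomputable def sigmaE (e : G.E) (x : List G.E × List G.E) : List G.E × List G.E :=
  G.red (e :: x.1) x.2

section Helpers

variable {G : DiGraph}

theorem pathEnd_append (u : G.V) (l m : List G.E) :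
    G.pathEnd u (l ++ m) = G.pathEnd (G.pathEnd u l) m := by
  induction l generalizing u with
  | nil => simp [pathEnd]
  | cons a as ih => simp [pathEnd, ih]

theorem isPathFrom_append {u : G.V} {l m : List G.E} :
    G.IsPathFrom u (l ++ m) ↔ G.IsPathFrom u l ∧ G.IsPathFrom (G.pathEnd u l) m := by
  induction l generalizing u with
  | nil => simp [IsPathFrom, pathEnd]
  | cons a as ih => simp [IsPathFrom, pathEnd, ih, and_assoc]

theorem redAux_nil_left (b : List G.E) : G.redAux [] b = ([], b) := by
  cases b <;> simp [redAux]

theorem redAux_nil_right (a : List G.E) : G.redAux a [] = (a, []) := by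
  cases a <;> simp [redAux]

theorem redAux_cons_eq (a : G.E) (as bs : List G.E) :
    G.redAux (a :: as) (a :: bs) = G.redAux as bs := by
  simp [redAux]

theorem redAux_cons_ne {a b : G.E} (h : a ≠ b) (as bs : List G.E) :
    G.redAux (a :: as) (b :: bs) = (a :: as, b :: bs) := by
  simp [redAux, h]

theorem redAux_cancel (a b : List G.E) :
    ∃ t, a = t ++ (G.redAux a b).1 ∧ b = t ++ (G.redAux a b).2 := by
  induction a generalizing b with
  | nil => exact ⟨[], by simp [redAux_nil_left]⟩
  | cons x as ih =>
    cases b with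
    | nil => exact ⟨[], by simp [redAux_nil_right]⟩
    | cons y bs =>
      by_cases h : x = y
      · obtain ⟨t, h1, h2⟩ := ih bs
        subst h
        refine ⟨x :: t, ?_, ?_⟩ <;>
          simp [redAux_cons_eq, ← h1, ← h2]
      · exact ⟨[], by simp [redAux_cons_ne h]⟩

theorem redAux_idem (a b : List G.E) :
    G.redAux (G.redAux a b).1 (G.redAux a b).2 = G.redAux a b := by
  induction a generalizing b with
  | nil => simp [redAux_nil_left]
  | cons x as ih =>
    cases b with
    | nil => simp [redAux_nil_right]
    | cons y bs =>
      by_cases h : x = y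
      · subst h; simpa [redAux_cons_eq] using ih bs
      · simp [redAux_cons_ne h]

theorem red_spec (p q : List G.E) :
    ∃ t, p = (G.red p q).1 ++ t ∧ q = (G.red p q).2 ++ t ∧
      G.red (G.red p q).1 (G.red p q).2 = G.red p q := by
  obtain ⟨t, h1, h2⟩ := redAux_cancel p.reverse q.reverse
  refine ⟨t.reverse, ?_, ?_, ?_⟩
  · have := congrArg List.reverse h1; simpa [red] using this
  · have := congrArg List.reverse h2; simpa [red] using this
  · simp [red, redAux_idem]

theorem isPathFrom_cons {u : G.V} {a : G.E} {as : List G.E} :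
    G.IsPathFrom u (a :: as) ↔ G.s a = u ∧ G.IsPathFrom (G.r a) as := by
  simp [IsPathFrom]

theorem mem_pathVerts {u w : G.V} {l : List G.E} :
    w ∈ G.pathVerts u l ↔ w = u ∨ ∃ e ∈ l, G.r e = w := by
  simp [pathVerts]

theorem s_mem_pathVerts {u : G.V} {l : List G.E} (h : G.IsPathFrom u l) {f : G.E}
    (hf : f ∈ l) : G.s f ∈ G.pathVerts u l := by
  induction l generalizing u with
  | nil => cases hf
  | cons a as ih =>
    obtain ⟨ha, has⟩ := isPathFrom_cons.1 h
    rcases List.mem_cons.1 hf with rfl | hf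
    · exact mem_pathVerts.2 (Or.inl ha)
    · rcases mem_pathVerts.1 (ih has hf) with h' | ⟨g, hg, hgr⟩
      · exact mem_pathVerts.2 (Or.inr ⟨a, by simp, h'.symm⟩)
      · exact mem_pathVerts.2 (Or.inr ⟨g, by simp [hg], hgr⟩)

theorem r_mem_pathVerts {u : G.V} {l : List G.E} {f : G.E} (hf : f ∈ l) :
    G.r f ∈ G.pathVerts u l :=
  mem_pathVerts.2 (Or.inr ⟨f, hf, rfl⟩)

theorem pathEnd_cons (u : G.V) (a : G.E) (as : List G.E) :
    G.pathEnd u (a :: as) = G.pathEnd (G.r a) as := by simp [pathEnd]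

theorem pathEnd_nil (u : G.V) : G.pathEnd u ([] : List G.E) = u := by simp [pathEnd]

theorem pathEnd_singleton (u : G.V) (f : G.E) : G.pathEnd u [f] = G.r f := by
  simp [pathEnd]

theorem isPathFrom_nil (u : G.V) : G.IsPathFrom u ([] : List G.E) := by
  simp [IsPathFrom]

theorem exists_dup_decomp {l : List G.E} (h : ¬ (l.map G.s).Nodup) :
    ∃ (l₁ : List G.E) (a : G.E) (l₂ : List G.E) (b : G.E) (l₃ : List G.E),
      l = l₁ ++ a :: (l₂ ++ b :: l₃) ∧ G.s a = G.s b := by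
  induction l with
  | nil => simp at h
  | cons a as ih =>
    rw [List.map_cons, List.nodup_cons] at h
    by_cases hmem : G.s a ∈ as.map G.s
    · obtain ⟨x, hx, hxs⟩ := List.mem_map.1 hmem
      obtain ⟨l₂, l₃, rfl⟩ := List.append_of_mem hx
      exact ⟨[], a, l₂, x, l₃, by simp, hxs.symm⟩
    · have hnd : ¬ (as.map G.s).Nodup := by tauto
      obtain ⟨l₁, x, l₂, y, l₃, rfl, hxy⟩ := ih hnd
      exact ⟨a :: l₁, x, l₂, y, l₃, by simp, hxy⟩

theorem cycle_reach_base {cv : G.V} {cl : List G.E} (hc : G.IsCycle cv cl) {u : G.V}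
    (hu : u ∈ G.pathVerts cv cl) : ∃ m, G.IsPathFrom u m ∧ G.pathEnd u m = cv := by
  rcases mem_pathVerts.1 hu with rfl | ⟨f, hf, rfl⟩
  · exact ⟨[], isPathFrom_nil _, pathEnd_nil _⟩
  · obtain ⟨c1, c2, rfl⟩ := List.append_of_mem hf
    have hpath := hc.2.1
    have hend := hc.2.2.1
    rw [show c1 ++ f :: c2 = (c1 ++ [f]) ++ c2 by simp, isPathFrom_append] at hpath
    rw [show c1 ++ f :: c2 = (c1 ++ [f]) ++ c2 by simp, pathEnd_append] at hend
    have he : G.pathEnd cv (c1 ++ [f]) = G.r f := by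
      rw [pathEnd_append, pathEnd_singleton]
    rw [he] at hpath hend
    exact ⟨c2, hpath.2, hend⟩

theorem cycle_reach_from_base {cv : G.V} {cl : List G.E} (hc : G.IsCycle cv cl)
    {u : G.V} (hu : u ∈ G.pathVerts cv cl) :
    ∃ m, G.IsPathFrom cv m ∧ G.pathEnd cv m = u := by
  rcases mem_pathVerts.1 hu with rfl | ⟨f, hf, rfl⟩
  · exact ⟨[], isPathFrom_nil _, pathEnd_nil _⟩
  · obtain ⟨c1, c2, rfl⟩ := List.append_of_mem hf
    have hpath := hc.2.1
    rw [show c1 ++ f :: c2 = (c1 ++ [f]) ++ c2 by simp, isPathFrom_append] at hpath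
    exact ⟨c1 ++ [f], hpath.1, by rw [pathEnd_append, pathEnd_singleton]⟩

theorem closed_walk_edges_mem {cv : G.V} {cl : List G.E} (hc : G.ExclusiveCycle cv cl) :
    ∀ n, ∀ l : List G.E, l.length ≤ n → ∀ u ∈ G.pathVerts cv cl,
      G.IsPathFrom u l → G.pathEnd u l = u → ∀ f ∈ l, f ∈ cl := by
  intro n
  induction n with
  | zero =>
    intro l hl u _ _ _ f hf
    rw [Nat.le_zero, List.length_eq_zero_iff] at hl
    subst hl; cases hf
  | succ n ih =>
    intro l hl u hu hpath hend f hf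
    by_cases hnd : (l.map G.s).Nodup
    · have hne : l ≠ [] := by rintro rfl; cases hf
      exact ((hc.2 u hu l ⟨hne, hpath, hend, hnd⟩) f).1 hf
    · obtain ⟨l₁, a, l₂, b, l₃, rfl, hab⟩ := exists_dup_decomp hnd
      rw [isPathFrom_append] at hpath
      obtain ⟨h1, h2⟩ := hpath
      obtain ⟨hsa, h3⟩ := isPathFrom_cons.1 h2
      rw [isPathFrom_append] at h3
      obtain ⟨h4, h5⟩ := h3
      obtain ⟨hsb, h6⟩ := isPathFrom_cons.1 h5
      rw [pathEnd_append, pathEnd_cons, pathEnd_append, pathEnd_cons] at hend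
      -- outer walk l₁ ++ b :: l₃
      have houter : ∀ g ∈ l₁ ++ b :: l₃, g ∈ cl := by
        refine ih (l₁ ++ b :: l₃) ?_ u hu ?_ ?_
        · have := hl; simp only [List.length_append, List.length_cons] at this ⊢; omega
        · rw [isPathFrom_append]
          exact ⟨h1, isPathFrom_cons.2 ⟨by rw [← hab, hsa], h6⟩⟩
        · rw [pathEnd_append, pathEnd_cons]; exact hend
      have hb : b ∈ cl := houter b (by simp)
      have hsb_mem : G.s b ∈ G.pathVerts cv cl := s_mem_pathVerts hc.1.2.1 hb
      -- inner walk a :: l₂ at s b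
      have hinner : ∀ g ∈ a :: l₂, g ∈ cl := by
        refine ih (a :: l₂) ?_ (G.s b) hsb_mem ?_ ?_
        · have := hl; simp only [List.length_append, List.length_cons] at this ⊢; omega
        · exact isPathFrom_cons.2 ⟨hab, h4⟩
        · rw [pathEnd_cons]; exact hsb.symm
      simp only [List.mem_append, List.mem_cons] at hf
      rcases hf with hf | rfl | hf | rfl | hf
      · exact houter f (by simp [hf])
      · exact hinner f (by simp)
      · exact hinner f (by simp [hf])
      · exact hb
      · exact houter f (by simp [hf])

theorem path_edges_mem {cv : G.V} {cl : List G.E} (hc : G.ExclusiveCycle cv cl)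
    {u u' : G.V} (hu : u ∈ G.pathVerts cv cl) (hu' : u' ∈ G.pathVerts cv cl)
    {p : List G.E} (hp : G.IsPathFrom u p) (hend : G.pathEnd u p = u') :
    ∀ f ∈ p, f ∈ cl := by
  obtain ⟨m1, hm1, hm1e⟩ := cycle_reach_base hc.1 hu'
  obtain ⟨m2, hm2, hm2e⟩ := cycle_reach_from_base hc.1 hu
  intro f hf
  refine closed_walk_edges_mem hc (p ++ m1 ++ m2).length (p ++ m1 ++ m2) le_rfl u hu
    ?_ ?_ f (by simp [hf])
  · rw [isPathFrom_append, isPathFrom_append]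
    refine ⟨⟨hp, by rw [hend]; exact hm1⟩, ?_⟩
    rw [pathEnd_append, hend, hm1e]; exact hm2
  · rw [pathEnd_append, pathEnd_append, hend, hm1e, hm2e]

end Helpers

/-- For every edge `e` belonging to the exclusive cycle `c`, `X_e = X_{s(e)}`. -/
theorem Xedge_eq_Xvtx_of_mem_cycle (G : DiGraph) (cv : G.V) (cl : List G.E)
    (hc : G.ExclusiveCycle cv cl) (v : G.V) (hv : v ∈ G.pathVerts cv cl)
    (e : G.E) (he : e ∈ cl) :
    G.Xedge cv cl v e = G.Xvtx cv cl v (G.s e) := by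
  have hclpath : G.IsPathFrom cv cl := hc.1.2.1
  have hse : G.s e ∈ G.pathVerts cv cl := s_mem_pathVerts hclpath he
  ext x
  constructor
  · rintro ⟨⟨rr, q⟩, hY, rfl⟩
    obtain ⟨hp, hq, hends, hmem⟩ := hY
    dsimp only at hp hq hends hmem
    have hsv : G.startVtx v (e :: rr, q) = G.s e := rfl
    rw [hsv] at hp hends
    have hmemcl : G.pathEnd (G.s e) (e :: rr) ∈ G.pathVerts cv cl := by
      rw [hends]; exact hmem
    have hqe : ∀ f ∈ q, f ∈ cl := path_edges_mem hc hv hmem hq rfl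
    obtain ⟨t, hP1, hP2, hPidem⟩ := red_spec (G := G) (e :: rr) q
    generalize hP : G.red (e :: rr) q = P at hP1 hP2 hPidem ⊢
    obtain ⟨P1, P2⟩ := P
    dsimp only at hP1 hP2
    rcases P1 with _ | ⟨f, fs⟩
    · -- reduced first component empty
      simp only [List.nil_append] at hP1
      subst hP1
      rw [hP2, isPathFrom_append] at hq
      have hv2 : G.pathEnd v P2 = G.s e := (isPathFrom_cons.1 hq.2).1.symm
      refine ⟨⟨⟨isPathFrom_nil _, hq.1, ?_, ?_⟩, hPidem⟩, ?_⟩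
      · show G.pathEnd (G.startVtx v (([] : List G.E), P2)) [] = G.pathEnd v P2
        exact pathEnd_nil _
      · show G.pathEnd v P2 ∈ G.pathVerts cv cl
        rw [hv2]; exact hse
      · show G.pathEnd v P2 = G.s e
        exact hv2
    · -- reduced first component nonempty
      rw [List.cons_append] at hP1
      injection hP1 with h1 h2
      subst h1; subst h2
      rw [← List.cons_append, isPathFrom_append] at hp
      rw [hP2, isPathFrom_append] at hq
      rw [← List.cons_append, pathEnd_append, hP2, pathEnd_append] at hends
      rw [← List.cons_append, pathEnd_append] at hmemcl
      have hkey : G.pathEnd (G.s e) (e :: fs) = G.pathEnd v P2 ∧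
          G.pathEnd v P2 ∈ G.pathVerts cv cl := by
        cases t with
        | nil =>
          rw [pathEnd_nil] at hmemcl
          constructor
          · have := hends; rwa [pathEnd_nil, pathEnd_nil] at this
          · have := hends; rw [pathEnd_nil, pathEnd_nil] at this; rwa [← this]
        | cons g ts =>
          have hga : G.s g = G.pathEnd (G.s e) (e :: fs) := (isPathFrom_cons.1 hp.2).1
          have hgb : G.s g = G.pathEnd v P2 := (isPathFrom_cons.1 hq.2).1
          have hg : g ∈ cl := hqe g (by rw [hP2]; simp)
          refine ⟨by rw [← hga, ← hgb], ?_⟩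
          rw [← hgb]
          exact s_mem_pathVerts hclpath hg
      exact ⟨⟨⟨hp.1, hq.1, hkey.1, hkey.2⟩, hPidem⟩, rfl⟩
  · rintro ⟨⟨hY, hred⟩, hstart⟩
    obtain ⟨p, q⟩ := x
    rcases p with _ | ⟨f, fs⟩
    · -- x = ([], q)
      obtain ⟨_, hq, _, _⟩ := hY
      dsimp only at hq
      have hstart' : G.pathEnd v q = G.s e := hstart
      refine ⟨([], q ++ [e]), ⟨?_, ?_, ?_, ?_⟩, ?_⟩
      · show G.IsPathFrom (G.s e) [e]
        exact isPathFrom_cons.2 ⟨rfl, isPathFrom_nil _⟩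
      · show G.IsPathFrom v (q ++ [e])
        rw [isPathFrom_append, hstart']
        exact ⟨hq, isPathFrom_cons.2 ⟨rfl, isPathFrom_nil _⟩⟩
      · show G.pathEnd (G.s e) [e] = G.pathEnd v (q ++ [e])
        rw [pathEnd_append, hstart']
      · show G.pathEnd v (q ++ [e]) ∈ G.pathVerts cv cl
        rw [pathEnd_append, hstart', pathEnd_singleton]
        exact r_mem_pathVerts he
      · show (([] : List G.E), q) = G.red [e] (q ++ [e])
        have : G.red [e] (q ++ [e]) = ([], q) := by
          simp [red, redAux_cons_eq, redAux_nil_left]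
        exact this.symm
    · -- x = (f :: fs, q)
      obtain ⟨hp, hq, hends, hmem⟩ := hY
      dsimp only at hp hq hends hmem
      have hsf : G.s f = G.s e := hstart
      have hsf_mem : G.s f ∈ G.pathVerts cv cl := by rw [hsf]; exact hse
      have hsv : G.startVtx v (f :: fs, q) = G.s f := rfl
      rw [hsv] at hp hends
      have hf_cl : f ∈ cl := path_edges_mem hc hsf_mem hmem hp hends f (by simp)
      have hfe : f = e := List.inj_on_of_nodup_map hc.1.2.2.2 hf_cl he hsf
      subst hfe
      exact ⟨(fs, q), ⟨hp, hq, hends, hmem⟩, hred.symm⟩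

end DiGraph
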